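/- arXiv:1407.8027 — 2 statements merged into one kernel-verified Lean document; each statement's English description precedes it below -/
import Mathlib

section
/- Let R be a commutative Noetherian ring, let m be a maximal ideal of R, and let M be a finitely generated R-module. Let M_m denote the localization of M at m, and let m₀ = m·R_m be the maximal ideal of the local ring R_m. Then the natural morphism M → M_m induces an isomorphism between the m-adic completion of M and the m₀-adic completion of M_m. -/
/-!
An element `s ∉ m` is invertible modulo `m ^ n`, so it acts bijectively on `M ⧸ m ^ n M`. Hence
`M ⧸ m ^ n M` is its own localization at `m`, which is `M_m ⧸ m₀ ^ n M_m`. These isomorphisms are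
induced by `M → M_m`, so they commute with the transition maps and pass to the inverse limits.
-/

open Submodule IsLocalizedModule

section Units

variable {R M : Type*} [CommRing R] [AddCommGroup M] [Module R M]

lemma Module.End.isUnit_algebraMap_quotient_smul_top {I : Ideal R} {s t i : R} (hi : i ∈ I)
    (h : t * s + i = 1) : IsUnit (algebraMap R (Module.End R (M ⧸ (I • ⊤ : Submodule R M))) s) := by
  have hst : algebraMap R (Module.End R (M ⧸ (I • ⊤ : Submodule R M))) s * algebraMap R _ t = 1 := by
    ext x
    have hx : s • t • x - x = -(i • x) := by linear_combination (norm := module) h • x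
    change Submodule.Quotient.mk (s • t • x) = Submodule.Quotient.mk x
    rw [Submodule.Quotient.eq, hx]
    exact neg_mem (smul_mem_smul hi mem_top)
  exact isUnit_iff_exists.2 ⟨_, hst, by rwa [← map_mul, mul_comm, map_mul]⟩

lemma IsLocalizedModule.bijective_of_isUnit {M' : Type*} [AddCommGroup M'] [Module R M']
    (p : Submonoid R) (f : M →ₗ[R] M') [IsLocalizedModule p f]
    (h : ∀ s : p, IsUnit (algebraMap R (Module.End R M) s)) : Function.Bijective f := by
  have : IsLocalizedModule p (LinearMap.id : M →ₗ[R] M) :=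
    ⟨h, fun y ↦ ⟨⟨y, 1⟩, by simp⟩, fun e ↦ ⟨1, by simpa using e⟩⟩
  have hf : (linearEquiv p LinearMap.id f).toLinearMap = f := by
    ext x; exact linearEquiv_apply p LinearMap.id f x
  rw [← hf]
  exact (linearEquiv p LinearMap.id f).bijective

end Units

section Localization

variable {R M N : Type*} (S : Type*) [CommRing R] [CommRing S] [Algebra R S]
  [AddCommGroup M] [Module R M] [AddCommGroup N] [Module R N] [Module S N] [IsScalarTower R S N]
  (m : Ideal R) [m.IsMaximal] [IsLocalization m.primeCompl S]
  (f : M →ₗ[R] N) [IsLocalizedModule m.primeCompl f]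

lemma Submodule.toLocalizedQuotient'_pow_smul_top_bijective (n : ℕ) :
    Function.Bijective ((m ^ n • ⊤ : Submodule R M).toLocalizedQuotient' S m.primeCompl f) :=
  bijective_of_isUnit m.primeCompl _ fun s ↦
    have ⟨_, _, hi, h⟩ := Ideal.IsMaximal.exists_inv_pow m s.2 n
    Module.End.isUnit_algebraMap_quotient_smul_top hi h

noncomputable def localizedQuotientPowEquiv (n : ℕ) :
    (M ⧸ (m ^ n • ⊤ : Submodule R M)) ≃ₗ[R]
      N ⧸ (m.map (algebraMap R S) ^ n • ⊤ : Submodule S N) :=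
  (LinearEquiv.ofBijective _ (toLocalizedQuotient'_pow_smul_top_bijective S m f n)).trans
    ((quotEquivOfEq _ _ (by
      rw [localized'_smul, Ideal.localized'_eq_map, localized'_top, Ideal.map_pow])).restrictScalars R)

lemma localizedQuotientPowEquiv_mk (n : ℕ) (x : M) :
    localizedQuotientPowEquiv S m f n (Submodule.Quotient.mk x) = Submodule.Quotient.mk (f x) :=
  rfl

end Localization

namespace AdicCompletion

variable {R S M N : Type*} [CommRing R] [CommRing S] [Algebra R S]
  [AddCommGroup M] [Module R M] [AddCommGroup N] [Module R N] [Module S N] [IsScalarTower R S N]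
  {I : Ideal R} {J : Ideal S} (f : M →ₗ[R] N)
  (e : ∀ n, (M ⧸ (I ^ n • ⊤ : Submodule R M)) ≃ₗ[R] N ⧸ (J ^ n • ⊤ : Submodule S N))

lemma transitionMap_quotientEquiv
    (he : ∀ n x, e n (Submodule.Quotient.mk x) = Submodule.Quotient.mk (f x))
    {k n : ℕ} (hkn : k ≤ n) (q : M ⧸ (I ^ n • ⊤ : Submodule R M)) :
    transitionMap J N hkn (e n q) = e k (transitionMap I M hkn q) := by
  obtain ⟨x, rfl⟩ := Submodule.Quotient.mk_surjective _ q
  rw [he]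
  exact (he k x).symm

noncomputable def congrOfQuotientEquiv
    (he : ∀ n x, e n (Submodule.Quotient.mk x) = Submodule.Quotient.mk (f x)) :
    AdicCompletion I M ≃ₗ[R] AdicCompletion J N where
  toFun x := ⟨fun n ↦ e n (x.val n), fun hkn ↦ by
    rw [transitionMap_quotientEquiv f e he, x.2 hkn]⟩
  invFun y := ⟨fun n ↦ (e n).symm (y.val n), fun hkn ↦ (e _).injective <| by
    rw [← transitionMap_quotientEquiv f e he, LinearEquiv.apply_symm_apply,
      LinearEquiv.apply_symm_apply, y.2 hkn]⟩
  left_inv x := ext fun n ↦ (e n).symm_apply_apply _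
  right_inv y := ext fun n ↦ (e n).apply_symm_apply _
  map_add' x y := ext fun n ↦ map_add (e n) _ _
  map_smul' r x := ext fun n ↦ map_smul (e n) r _

lemma congrOfQuotientEquiv_of
    (he : ∀ n x, e n (Submodule.Quotient.mk x) = Submodule.Quotient.mk (f x)) (x : M) :
    congrOfQuotientEquiv f e he (of I M x) = of J N (f x) :=
  ext fun n ↦ he n x

end AdicCompletion

theorem adicCompletion_equiv_adicCompletion_localization_general
    {R : Type*} [CommRing R] (m : Ideal R) [m.IsMaximal]
    (M : Type*) [AddCommGroup M] [Module R M] :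
    ∃ e : AdicCompletion m M ≃+
        AdicCompletion (m.map (algebraMap R (Localization.AtPrime m)))
          (LocalizedModule m.primeCompl M),
      (∀ x : M,
        e (AdicCompletion.of m M x) =
          AdicCompletion.of (m.map (algebraMap R (Localization.AtPrime m)))
            (LocalizedModule m.primeCompl M)
            (LocalizedModule.mkLinearMap m.primeCompl M x)) ∧
      (∀ (r : R) (y : AdicCompletion m M),
        e (r • y) = algebraMap R (Localization.AtPrime m) r • e y) := by
  let f := LocalizedModule.mkLinearMap m.primeCompl M
  have he := localizedQuotientPowEquiv_mk (Localization.AtPrime m) m f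
  let e := AdicCompletion.congrOfQuotientEquiv f _ he
  exact ⟨e.toAddEquiv, AdicCompletion.congrOfQuotientEquiv_of f _ he,
    fun r y ↦ (e.map_smul r y).trans (algebraMap_smul _ r (e y)).symm⟩

/-- Let `R` be a commutative Noetherian ring, `m` a maximal ideal of `R`, and
`M` a finitely generated `R`-module.  Let `M_m` denote the localization of `M` at `m`, and let
`m₀ = m · R_m` be the maximal ideal of the local ring `R_m`.  Then the natural morphism
`M → M_m` induces an isomorphism between the `m`-adic completion of `M` and the `m₀`-adic
completion of `M_m`.  (The isomorphism is additive and semilinear over the canonical map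
`R → R_m`, and it is compatible with the natural maps of `M` and `M_m` into their
completions.) -/
theorem adicCompletion_equiv_adicCompletion_localization
    {R : Type*} [CommRing R] [IsNoetherianRing R] (m : Ideal R) [m.IsMaximal]
    (M : Type*) [AddCommGroup M] [Module R M] [Module.Finite R M] :
    ∃ e : AdicCompletion m M ≃+
        AdicCompletion (m.map (algebraMap R (Localization.AtPrime m)))
          (LocalizedModule m.primeCompl M),
      (∀ x : M,
        e (AdicCompletion.of m M x) =
          AdicCompletion.of (m.map (algebraMap R (Localization.AtPrime m)))
            (LocalizedModule m.primeCompl M)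
            (LocalizedModule.mkLinearMap m.primeCompl M x)) ∧
      (∀ (r : R) (y : AdicCompletion m M),
        e (r • y) = algebraMap R (Localization.AtPrime m) r • e y) :=
  adicCompletion_equiv_adicCompletion_localization_general m M
end

section
/- Let R be a commutative ring that is a finitely generated ℂ-algebra, let m be a maximal ideal of R, and let M be a finitely generated R-module. Denote by M̂ the m-adic completion of M, regarded as a ℂ-vector space. Then M̂ is finite-dimensional over ℂ if and only if m is an isolated point of the support of M (i.e., either m ∉ supp(M), or {m} is open in supp(M) viewed as a subspace of the prime spectrum of R). -/
/-!
Both sides are equivalent to the stabilization `m ^ (n + 1) • M = m ^ n • M` of the `m`-adic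
filtration for some `n`.

If `M̂` is finite-dimensional it is an Artinian `R`-module, so the decreasing kernels of
`M̂ → M ⧸ m ^ n • M` stabilize, and evaluating on the image of `M` shows that the filtration
stabilizes. Conversely, once the filtration is stable, `M̂ → M ⧸ m ^ n • M` is injective, and the
target is finite-dimensional because `R ⧸ m ^ n` is a zero-dimensional, hence finite,
finite-type algebra.

By Nakayama, the filtration stabilizes iff some `g ∉ m` kills `m ^ n • M`, i.e.
`g • m ^ n ⊆ Ann M`. In a Noetherian ring this means `V(Ann M) ∩ D(g) ⊆ {m}` (via `√(Ann M)`),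
and `V(Ann M) = supp M`, so this is exactly the isolatedness of `m` in the support.
-/

open PrimeSpectrum Submodule

section PrimeSpectrum

variable {R : Type*} [CommRing R]

theorem PrimeSpectrum.notMem_or_isOpen_singleton_iff {S : Set (PrimeSpectrum R)}
    (hS : IsClosed S) (p : PrimeSpectrum R) :
    (p ∉ S ∨ IsOpen {x : S | (x : PrimeSpectrum R) = p}) ↔
      ∃ g ∉ p.asIdeal, S ∩ basicOpen g ⊆ {p} := by
  constructor
  · intro h
    obtain ⟨U, hU, hpU, hUS⟩ : ∃ U, IsOpen U ∧ p ∈ U ∧ S ∩ U ⊆ {p} := by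
      by_cases hp : p ∈ S
      · obtain ⟨U, hU, hUS⟩ := isOpen_induced_iff.mp (h.resolve_left (not_not.mpr hp))
        exact ⟨U, hU, (Set.ext_iff.mp hUS ⟨p, hp⟩).mpr rfl,
          fun q ⟨hq, hqU⟩ => (Set.ext_iff.mp hUS ⟨q, hq⟩).mp hqU⟩
      · exact ⟨Sᶜ, hS.isOpen_compl, hp, fun q ⟨hq, hqS⟩ => absurd hq hqS⟩
    obtain ⟨_, ⟨g, rfl⟩, hpg, hgU⟩ :=
      isTopologicalBasis_basic_opens.exists_subset_of_mem_open hpU hU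
    exact ⟨g, hpg, (Set.inter_subset_inter_right S hgU).trans hUS⟩
  · rintro ⟨g, hpg, hg⟩
    refine or_iff_not_imp_left.mpr fun _ => ?_
    convert (basicOpen g).isOpen.preimage continuous_subtype_val
    ext ⟨q, hq⟩
    exact ⟨fun (h : q = p) => (h ▸ hpg : g ∉ q.asIdeal), fun hgq => hg ⟨hq, hgq⟩⟩

theorem PrimeSpectrum.exists_zeroLocus_inter_basicOpen_subset_iff [IsNoetherianRing R]
    (I : Ideal R) (p : PrimeSpectrum R) (hp : p.asIdeal.IsMaximal) :
    (∃ g ∉ p.asIdeal, zeroLocus (I : Set R) ∩ basicOpen g ⊆ {p}) ↔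
      ∃ g ∉ p.asIdeal, ∃ n, ∀ a ∈ p.asIdeal ^ n, g * a ∈ I := by
  constructor
  · rintro ⟨g, hgp, hg⟩
    have hrad : Ideal.span {g} * p.asIdeal ≤ I.radical := by
      rw [Ideal.radical_eq_sInf, le_sInf_iff]
      rintro J ⟨hIJ, hJ⟩
      by_cases hgJ : g ∈ J
      · exact Ideal.mul_le_left.trans ((Ideal.span_singleton_le_iff_mem J).mpr hgJ)
      · rw [← congrArg asIdeal (hg ⟨hIJ, hgJ⟩ : (⟨J, hJ⟩ : PrimeSpectrum R) = p)]
        exact Ideal.mul_le_right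
    obtain ⟨n, hn⟩ := I.exists_radical_pow_le_of_fg (IsNoetherian.noetherian _)
    refine ⟨g ^ n, fun h => hgp (p.isPrime.mem_of_pow_mem n h), n, fun a ha => hn ?_⟩
    have := Ideal.pow_right_mono hrad n
    rw [mul_pow, Ideal.span_singleton_pow] at this
    exact this (Ideal.mul_mem_mul (Ideal.mem_span_singleton_self _) ha)
  · rintro ⟨g, hgp, n, hg⟩
    refine ⟨g, hgp, fun q ⟨hIq, (hgq : g ∉ q.asIdeal)⟩ => ?_⟩
    have hpq : p.asIdeal ≤ q.asIdeal := q.isPrime.le_of_pow_le fun a ha =>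
      (q.isPrime.mem_or_mem (hIq (hg a ha))).resolve_left hgq
    exact (PrimeSpectrum.ext (hp.eq_of_le q.isPrime.ne_top hpq)).symm

end PrimeSpectrum

section AdicFiltration

variable {R M : Type*} [CommRing R] [AddCommGroup M] [Module R M]

theorem Submodule.pow_smul_top_eq_of_pow_succ_smul_top_eq {I : Ideal R} {n : ℕ}
    (h : I ^ (n + 1) • (⊤ : Submodule R M) = I ^ n • ⊤) {j : ℕ} (hj : n ≤ j) :
    I ^ j • (⊤ : Submodule R M) = I ^ n • ⊤ := by
  induction j, hj using Nat.le_induction with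
  | base => rfl
  | succ j _ ih => rw [pow_succ', mul_smul, ih, ← mul_smul, ← pow_succ', h]

theorem Submodule.pow_succ_smul_top_eq_of_mul_mem_annihilator {m : Ideal R} [m.IsMaximal]
    {g : R} (hg : g ∉ m) {n : ℕ} (h : ∀ a ∈ m ^ n, g * a ∈ Module.annihilator R M) :
    m ^ (n + 1) • (⊤ : Submodule R M) = m ^ n • ⊤ := by
  refine le_antisymm (smul_mono_left (Ideal.pow_le_pow_right n.le_succ))
    (smul_le.mpr fun a ha x _ => ?_)
  obtain ⟨b, c, hc, hbc⟩ := ‹m.IsMaximal›.exists_inv hg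
  have hx : a • x = (c * a) • x := calc
    a • x = ((b * g + c) * a) • x := by rw [hbc, one_mul]
    _ = b • (g * a) • x + (c * a) • x := by rw [add_mul, add_smul, mul_assoc, mul_smul]
    _ = (c * a) • x := by rw [Module.mem_annihilator.mp (h a ha), smul_zero, zero_add]
  rw [hx, pow_succ']
  exact smul_mem_smul (Ideal.mul_mem_mul hc ha) mem_top

theorem Submodule.exists_mul_mem_annihilator_of_pow_succ_smul_top_eq {m : Ideal R} (hm : m ≠ ⊤)
    {n : ℕ} (hfg : (m ^ n • ⊤ : Submodule R M).FG)
    (h : m ^ (n + 1) • (⊤ : Submodule R M) = m ^ n • ⊤) :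
    ∃ g ∉ m, ∀ a ∈ m ^ n, g * a ∈ Module.annihilator R M := by
  obtain ⟨r, hr1, hr⟩ := exists_sub_one_mem_and_smul_eq_zero_of_fg_of_le_smul m _ hfg
    (by rw [← mul_smul, ← pow_succ', h])
  refine ⟨r, fun hrm => hm ((Ideal.eq_top_iff_one m).mpr (by simpa using m.sub_mem hrm hr1)),
    fun a ha => Module.mem_annihilator.mpr fun x => ?_⟩
  rw [mul_smul]
  exact hr _ (smul_mem_smul ha mem_top)

theorem Submodule.exists_mul_mem_annihilator_iff_exists_pow_succ_smul_top_eq [IsNoetherianRing R]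
    [Module.Finite R M] (m : Ideal R) [hm : m.IsMaximal] :
    (∃ g ∉ m, ∃ n, ∀ a ∈ m ^ n, g * a ∈ Module.annihilator R M) ↔
      ∃ n, m ^ (n + 1) • (⊤ : Submodule R M) = m ^ n • ⊤ := by
  constructor
  · rintro ⟨g, hg, n, h⟩
    exact ⟨n, pow_succ_smul_top_eq_of_mul_mem_annihilator hg h⟩
  · rintro ⟨n, h⟩
    obtain ⟨g, hg, hann⟩ :=
      exists_mul_mem_annihilator_of_pow_succ_smul_top_eq hm.ne_top (IsNoetherian.noetherian _) h
    exact ⟨g, hg, n, hann⟩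

end AdicFiltration

namespace AdicCompletion

variable {R M : Type*} [CommRing R] [AddCommGroup M] [Module R M] {I : Ideal R}

theorem of_mem_ker_eval_iff (n : ℕ) (x : M) :
    of I M x ∈ LinearMap.ker (eval I M n) ↔ x ∈ I ^ n • (⊤ : Submodule R M) := by
  rw [LinearMap.mem_ker, eval_of, mkQ_apply, Quotient.mk_eq_zero]

theorem antitone_ker_eval : Antitone fun n => LinearMap.ker (eval I M n) := by
  refine antitone_nat_of_succ_le fun n x hx => ?_
  rw [LinearMap.mem_ker, eval_apply] at hx ⊢
  rw [← transitionMap_comp_eval_apply I M n.le_succ, hx, LinearMap.map_zero]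

theorem exists_pow_succ_smul_top_eq [IsArtinian R (AdicCompletion I M)] :
    ∃ n, I ^ (n + 1) • (⊤ : Submodule R M) = I ^ n • ⊤ := by
  obtain ⟨n, hn⟩ := IsArtinian.monotone_stabilizes ⟨_, antitone_ker_eval (I := I) (M := M)⟩
  refine ⟨n, le_antisymm (smul_mono_left (Ideal.pow_le_pow_right n.le_succ)) fun x hx => ?_⟩
  have hker : LinearMap.ker (eval I M n) = LinearMap.ker (eval I M (n + 1)) := hn (n + 1) n.le_succ
  rw [← of_mem_ker_eval_iff] at hx ⊢
  rwa [← hker]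

theorem eval_injective_of_pow_succ_smul_top_eq {n : ℕ}
    (h : I ^ (n + 1) • (⊤ : Submodule R M) = I ^ n • ⊤) : Function.Injective (eval I M n) := by
  refine (injective_iff_map_eq_zero _).mpr fun x hx => ext fun j => ?_
  rw [eval_apply] at hx
  rcases le_total j n with hj | hj
  · rw [val_zero_apply, ← transitionMap_comp_eval_apply I M hj, hx, LinearMap.map_zero]
  · obtain ⟨y, hy⟩ := Submodule.Quotient.mk_surjective _ (x.val j)
    have hyn : y ∈ I ^ n • (⊤ : Submodule R M) := by
      rw [← Quotient.mk_eq_zero, ← hx, ← transitionMap_comp_eval_apply I M hj, ← hy]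
      rfl
    rwa [val_zero_apply, ← hy, Quotient.mk_eq_zero, pow_smul_top_eq_of_pow_succ_smul_top_eq h hj]

end AdicCompletion

section FiniteType

variable (k : Type*) {R : Type*} [Field k] [CommRing R] [Algebra k R] [Algebra.FiniteType k R]

theorem Ideal.finite_quotient_pow_of_isMaximal (m : Ideal R) [hm : m.IsMaximal] (n : ℕ) :
    Module.Finite k (R ⧸ m ^ n) := by
  have : Ring.KrullDimLE 0 (R ⧸ m ^ n) :=
    krullDimLE_zero_quotient_iff_forall_minimalPrimes_isMaximal.mpr fun J hJ => by
      rwa [← hm.eq_of_le hJ.1.1.ne_top (hJ.1.1.le_of_pow_le hJ.1.2)]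
  exact (Module.finite_iff_krullDimLE_zero k _).mpr this

variable (M : Type*) [AddCommGroup M] [Module R M] [Module k M] [IsScalarTower k R M]
  [Module.Finite R M]

theorem Submodule.finite_quotient_pow_smul_top (m : Ideal R) [m.IsMaximal] (n : ℕ) :
    Module.Finite k (M ⧸ m ^ n • (⊤ : Submodule R M)) :=
  have := Ideal.finite_quotient_pow_of_isMaximal k m n
  .trans (R ⧸ m ^ n) (M ⧸ m ^ n • (⊤ : Submodule R M))

theorem AdicCompletion.finite_iff_exists_pow_succ_smul_top_eq (m : Ideal R) [m.IsMaximal] :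
    Module.Finite k (AdicCompletion m M) ↔ ∃ n, m ^ (n + 1) • (⊤ : Submodule R M) = m ^ n • ⊤ := by
  constructor
  · intro
    have : IsArtinian R (AdicCompletion m M) := isArtinian_of_tower k inferInstance
    exact exists_pow_succ_smul_top_eq
  · rintro ⟨n, h⟩
    have := finite_quotient_pow_smul_top k M m n
    refine .of_injective ((eval m M n).restrictScalars k) ?_
    rw [LinearMap.coe_restrictScalars]
    exact eval_injective_of_pow_succ_smul_top_eq h

end FiniteType

/-- Let `R` be a commutative finitely generated `ℂ`-algebra, `m` a maximal
ideal of `R`, and `M` a finitely generated `R`-module.  Then the `m`-adic completion of `M`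
(viewed as a `ℂ`-vector space via the algebra map `ℂ → R`) is finite-dimensional over `ℂ` if
and only if `m` is an isolated point of the support of `M`, i.e. either `m ∉ supp M`, or
`{m}` is open in `supp M` with the subspace topology from `Spec R`. -/
theorem adicCompletion_finiteDimensional_iff_isolated_in_support
    {R : Type*} [CommRing R] [Algebra ℂ R] [Algebra.FiniteType ℂ R]
    (m : Ideal R) [hm : m.IsMaximal]
    (M : Type*) [AddCommGroup M] [Module R M] [Module.Finite R M] :
    @FiniteDimensional ℂ (RestrictScalars ℂ R (AdicCompletion m M)) _ _
      (RestrictScalars.module ℂ R (AdicCompletion m M)) ↔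
      ((⟨m, hm.isPrime⟩ : PrimeSpectrum R) ∉ Module.support R M ∨
        IsOpen {x : Module.support R M |
          (x : PrimeSpectrum R) = (⟨m, hm.isPrime⟩ : PrimeSpectrum R)}) := by
  -- With this structure, the `ℂ`-action on `RestrictScalars ℂ R (AdicCompletion m M)` is
  -- definitionally the one `AdicCompletion m M` inherits from `M`.
  let _ : Module ℂ M := .compHom M (algebraMap ℂ R)
  have : IsScalarTower ℂ R M := ⟨fun c r x => by rw [Algebra.smul_def, mul_smul]; rfl⟩
  have : IsNoetherianRing R := Algebra.FiniteType.isNoetherianRing ℂ R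
  let e : RestrictScalars ℂ R (AdicCompletion m M) ≃ₗ[ℂ] AdicCompletion m M :=
    { RestrictScalars.addEquiv ℂ R _ with map_smul' := fun _ _ => rfl }
  let p : PrimeSpectrum R := ⟨m, hm.isPrime⟩
  calc _ ↔ Module.Finite ℂ (AdicCompletion m M) := Module.Finite.equiv_iff e
    _ ↔ ∃ n, m ^ (n + 1) • (⊤ : Submodule R M) = m ^ n • ⊤ :=
      AdicCompletion.finite_iff_exists_pow_succ_smul_top_eq ℂ M m
    _ ↔ ∃ g ∉ m, ∃ n, ∀ a ∈ m ^ n, g * a ∈ Module.annihilator R M :=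
      (exists_mul_mem_annihilator_iff_exists_pow_succ_smul_top_eq m).symm
    _ ↔ ∃ g ∉ m, zeroLocus (Module.annihilator R M : Set R) ∩ basicOpen g ⊆ {p} :=
      (exists_zeroLocus_inter_basicOpen_subset_iff _ p hm).symm
    _ ↔ _ := by
      rw [Module.support_eq_zeroLocus]
      exact (notMem_or_isOpen_singleton_iff (isClosed_zeroLocus _) p).symm
end
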